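/- arXiv:1205.4221 — 3 statements merged into one kernel-verified Lean document; each statement's English description precedes it below -/
import Mathlib

section
/- Let K be a field, π ∈ K nonzero, and let u ∈ K with 1 − u³ ≠ 0, 1 + u + u² ≠ 0. Set x = π/(1−u³) + 1, y = u/(1−u³) + 1, z = u/(π(1+u+u²)). Then all 2×2 minors of the matrix with rows (x−1, π(y−1), π(y−1−πz)) and (π(y−1), π(y−1−πz), x−1−π) vanish, i.e., the point (x,y,z) lies on the curve V defined by these minors. -/
/-- The rational parametrization `x = π/(1−u³)+1`, `y = u/(1−u³)+1`,
`z = u/(π(1+u+u²))` satisfies all three 2×2 minors of the matrix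
`[[x−1, π(y−1), π(y−1−πz)], [π(y−1), π(y−1−πz), x−1−π]]`, i.e. lies on `V`. -/
theorem stmt2 (K : Type*) [Field K] (π u : K) (hπ : π ≠ 0)
    (h1 : 1 - u ^ 3 ≠ 0) (h2 : 1 + u + u ^ 2 ≠ 0)
    (x y z : K)
    (hx : x = π / (1 - u ^ 3) + 1)
    (hy : y = u / (1 - u ^ 3) + 1)
    (hz : z = u / (π * (1 + u + u ^ 2))) :
    (x - 1) * (π * (y - 1 - π * z)) - (π * (y - 1)) * (π * (y - 1)) = 0 ∧
    (π * (y - 1)) * (x - 1 - π) - (π * (y - 1 - π * z)) * (π * (y - 1 - π * z)) = 0 ∧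
    (x - 1) * (x - 1 - π) - (π * (y - 1)) * (π * (y - 1 - π * z)) = 0 := by
  subst hx hy hz
  refine ⟨?_, ?_, ?_⟩ <;> field_simp <;> ring
end

section
/- Let M be a matroid on ground set E = {1,…,N} with basis set ℬ, and let w ∈ ℝ^N. Define ℬ_w ⊆ ℬ to be the set of bases B minimizing w(B) = Σ_{i∈B} w_i. Then ℬ_w is the set of bases of a matroid on E; i.e., ℬ_w is nonempty and satisfies the basis exchange axiom. -/
/-!
Symmetric basis exchange: for bases `B₁, B₂` and `e ∈ B₁ \ B₂`, the fundamental circuit of `e`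
in `B₂` and the fundamental cocircuit of `e` in `B₁` share `e`, hence (a circuit never meets a
cocircuit in exactly one element) also some `f ≠ e`; then both `B₁ - e + f` and `B₂ - f + e` are
bases. If `B₁, B₂` are `w`-minimal, minimality of `B₂` gives `w f ≤ w e`, so `B₁ - e + f` is
again `w`-minimal.
-/

open Set

lemma finsum_mem_insert_sdiff_singleton_add {α G : Type*} [AddCommMonoid G] (w : α → G)
    {B : Set α} {e f : α} (hB : B.Finite) (he : e ∈ B) (hf : f ∉ B) :
    (∑ᶠ i ∈ insert f (B \ {e}), w i) + w e = (∑ᶠ i ∈ B, w i) + w f := by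
  have hsplit : (∑ᶠ i ∈ B, w i) = w e + ∑ᶠ i ∈ B \ {e}, w i := by
    conv_lhs => rw [← insert_sdiff_self_of_mem he]
    exact finsum_mem_insert w (fun h ↦ h.2 rfl) (hB.subset sdiff_subset)
  rw [finsum_mem_insert w (fun h ↦ hf h.1) (hB.subset sdiff_subset), hsplit]
  abel

namespace Matroid

variable {α : Type*} {M : Matroid α} {B B₁ B₂ : Set α} {e f : α}

lemma IsBase.isBase_insert_sdiff_of_mem_fundCircuit (hB : M.IsBase B) (he : e ∈ B) (hf : f ∉ B)
    (hfE : f ∈ M.E) (hef : e ∈ M.fundCircuit f B) : M.IsBase (insert f (B \ {e})) := by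
  have hfe : f ≠ e := fun h ↦ hf (h ▸ he)
  rw [insert_sdiff_singleton_comm hfe]
  exact hB.exchange_isBase_of_indep' he hf
    ((hB.indep.mem_fundCircuit_iff (by rwa [hB.closure_eq]) hf).1 hef)

theorem IsBase.exists_symm_exchange (hB₁ : M.IsBase B₁) (hB₂ : M.IsBase B₂) (he : e ∈ B₁ \ B₂) :
    ∃ f ∈ B₂ \ B₁, M.IsBase (insert f (B₁ \ {e})) ∧ M.IsBase (insert e (B₂ \ {f})) := by
  have heE : e ∈ M.E := hB₁.subset_ground he.1
  have hC := hB₂.fundCircuit_isCircuit heE he.2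
  have hK := fundCocircuit_isCocircuit he.1 hB₁
  obtain ⟨f, ⟨hfC, hfK⟩, hfe⟩ := (hC.isCocircuit_inter_nontrivial hK
    ⟨e, M.mem_fundCircuit e B₂, M.mem_fundCocircuit e B₁⟩).exists_ne e
  have hfB₂ : f ∈ B₂ := by
    simpa [hfe] using M.fundCircuit_subset_insert e B₂ hfC
  have hfB₁ : f ∉ B₁ := fun hfB₁ ↦
    hfe ((M.fundCocircuit_inter_eq he.1).subset ⟨hfK, hfB₁⟩)
  refine ⟨f, ⟨hfB₂, hfB₁⟩, ?_, ?_⟩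
  · refine hB₁.isBase_insert_sdiff_of_mem_fundCircuit he.1 hfB₁ (hB₂.subset_ground hfB₂) ?_
    rwa [← hB₁.mem_fundCocircuit_iff_mem_fundCircuit]
  · exact hB₂.isBase_insert_sdiff_of_mem_fundCircuit hfB₂ he.2 heE hfC

section Weight

variable {G : Type*} [AddCommMonoid G]

def IsMinWeightBase [LE G] (M : Matroid α) (w : α → G) (B : Set α) : Prop :=
  M.IsBase B ∧ ∀ B', M.IsBase B' → (∑ᶠ i ∈ B, w i) ≤ ∑ᶠ i ∈ B', w i

lemma exists_isMinWeightBase [LinearOrder G] [M.Finite] (w : α → G) :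
    ∃ B, M.IsMinWeightBase w B := by
  have hfin : {B | M.IsBase B}.Finite :=
    M.ground_finite.finite_subsets.subset fun _ hB ↦ hB.subset_ground
  obtain ⟨B, hB, hmin⟩ := exists_min_image _ (fun B ↦ ∑ᶠ i ∈ B, w i) hfin M.exists_isBase
  exact ⟨B, hB, hmin⟩

theorem IsMinWeightBase.exchange [PartialOrder G] [IsOrderedCancelAddMonoid G] [M.RankFinite]
    {w : α → G} (h₁ : M.IsMinWeightBase w B₁) (h₂ : M.IsMinWeightBase w B₂) (he : e ∈ B₁ \ B₂) :
    ∃ f ∈ B₂ \ B₁, M.IsMinWeightBase w (insert f (B₁ \ {e})) := by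
  obtain ⟨f, hf, hB₁', hB₂'⟩ := h₁.1.exists_symm_exchange h₂.1 he
  have hwfe : w f ≤ w e := by
    have h : (∑ᶠ i ∈ B₂, w i) + w f ≤ (∑ᶠ i ∈ insert e (B₂ \ {f}), w i) + w f := by
      gcongr
      exact h₂.2 _ hB₂'
    rw [finsum_mem_insert_sdiff_singleton_add w h₂.1.finite hf.1 he.2] at h
    exact le_of_add_le_add_left h
  refine ⟨f, hf, hB₁', fun B' hB' ↦ le_of_add_le_add_right (a := w e) ?_⟩
  calc (∑ᶠ i ∈ insert f (B₁ \ {e}), w i) + w e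
      = (∑ᶠ i ∈ B₁, w i) + w f := finsum_mem_insert_sdiff_singleton_add w h₁.1.finite he.1 hf.2
    _ ≤ (∑ᶠ i ∈ B', w i) + w e := add_le_add (h₁.2 B' hB') hwfe

end Weight

end Matroid

/-- For a finite matroid `M` on `{1,…,N}` and `w ∈ ℝ^N`, the set of `w`-minimal
bases is the basis set of a matroid: it is nonempty and satisfies the basis
exchange axiom. -/
theorem stmt10 (N : ℕ) (M : Matroid (Fin N)) [M.Finite] (w : Fin N → ℝ) :
    letI Bw : Set (Fin N) → Prop := fun B =>
      M.IsBase B ∧ ∀ B', M.IsBase B' → (∑ᶠ i ∈ B, w i) ≤ ∑ᶠ i ∈ B', w i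
    (∃ B, Bw B) ∧
    (∀ B₁ B₂ : Set (Fin N), Bw B₁ → Bw B₂ → ∀ e ∈ B₁ \ B₂,
      ∃ f ∈ B₂ \ B₁, Bw (insert f (B₁ \ {e}))) :=
  ⟨M.exists_isMinWeightBase w, fun _ _ h₁ h₂ _ he ↦ Matroid.IsMinWeightBase.exchange h₁ h₂ he⟩
end

section
/- Let K ⊆ K̃ be an extension of fields with compatible valuations (the valuation on K̃ restricts to the valuation on K), with valuation rings R ⊆ R̃ and residue fields k ⊆ k̃, and fix w ∈ ℝ^N lying in both value groups with compatible splittings. If I ⊆ K[x₁^±,…,x_N^±] is an ideal with initial ideal in_w(I) ⊆ k[x₁^±,…,x_N^±], then the initial ideal of the extended ideal I·K̃[x₁^±,…,x_N^±] equals in_w(I)·k̃[x₁^±,…,x_N^±]; i.e., initial ideals commute with base change of valued fields. -/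
noncomputable section

/-- A rank-one (additive, real-valued) valuation on a field. -/
structure AddVal (K : Type*) [Field K] where
  v : K → WithTop ℝ
  v_eq_top_iff : ∀ a, v a = ⊤ ↔ a = 0
  v_one : v 1 = 0
  v_mul : ∀ a b, v (a * b) = v a + v b
  v_add : ∀ a b, min (v a) (v b) ≤ v (a + b)
  v_neg : ∀ a, v (-a) = v a

variable {K L : Type*} [Field K] [Field L]

/-- The valuation ring of an additive valuation. -/
def AddVal.R (val : AddVal K) : Subring K where
  carrier := {a | 0 ≤ val.v a}
  one_mem' := by show (0 : WithTop ℝ) ≤ val.v 1; rw [val.v_one]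
  mul_mem' := fun ha hb => by
    show (0 : WithTop ℝ) ≤ val.v _
    rw [val.v_mul]; exact add_nonneg ha hb
  zero_mem' := by
    show (0 : WithTop ℝ) ≤ val.v 0
    rw [(val.v_eq_top_iff 0).2 rfl]; exact le_top
  add_mem' := fun ha hb => le_trans (le_min ha hb) (val.v_add _ _)
  neg_mem' := fun ha => by
    show (0 : WithTop ℝ) ≤ val.v _
    rw [val.v_neg]; exact ha

/-- The maximal ideal of the valuation ring. -/
def AddVal.mIdeal (val : AddVal K) : Ideal val.R where
  carrier := {a | 0 < val.v a.1}
  zero_mem' := by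
    show (0 : WithTop ℝ) < val.v 0
    rw [(val.v_eq_top_iff 0).2 rfl]
    exact lt_top_iff_ne_top.mpr (by simp)
  add_mem' := fun ha hb => lt_of_lt_of_le (lt_min ha hb) (val.v_add _ _)
  smul_mem' := fun c a ha => by
    show (0 : WithTop ℝ) < val.v (c.1 * a.1)
    rw [val.v_mul]
    exact lt_of_lt_of_le ha (le_add_of_nonneg_left c.2)

/-- The residue field (as a ring) of an additive valuation. -/
def AddVal.k (val : AddVal K) := val.R ⧸ val.mIdeal

instance (val : AddVal K) : CommRing val.k := by unfold AddVal.k; infer_instance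

/-- Reduction of an element of the valuation ring to the residue field
(and `0` on elements of negative valuation). -/
def AddVal.res (val : AddVal K) (a : K) : val.k :=
  if h : 0 ≤ val.v a then Ideal.Quotient.mk val.mIdeal ⟨a, h⟩ else 0

/-- Weight of the monomial `x^u` under `w ∈ ℝ^N`. -/
def dotw {N : ℕ} (w : Fin N → ℝ) (u : Fin N → ℤ) : ℝ := ∑ i, w i * (u i : ℝ)

/-- The `w`-initial form of a Laurent polynomial lying in the tilted algebra:
keep the terms `a_u x^u` with `val(a_u) + w·u = 0`, reduced after multiplying by
the splitting element `r(w·u)`. -/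
def initForm (val : AddVal K) (r : ℝ → K) {N : ℕ} (w : Fin N → ℝ)
    (f : AddMonoidAlgebra K (Fin N → ℤ)) : AddMonoidAlgebra val.k (Fin N → ℤ) :=
  f.coeff.sum fun u a => AddMonoidAlgebra.single u
    (if val.v a + ((dotw w u : ℝ) : WithTop ℝ) = 0 then val.res (a * r (dotw w u)) else 0)

/-- The `w`-initial ideal: the ideal generated by the initial forms of the
elements of `I` lying in the tilted algebra `R[x^±]^w`. -/
def initIdeal (val : AddVal K) (r : ℝ → K) {N : ℕ} (w : Fin N → ℝ)
    (I : Ideal (AddMonoidAlgebra K (Fin N → ℤ))) : Ideal (AddMonoidAlgebra val.k (Fin N → ℤ)) :=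
  Ideal.span {g | ∃ f ∈ I,
    (∀ u ∈ f.coeff.support, (0 : WithTop ℝ) ≤ val.v (f.coeff u) + ((dotw w u : ℝ) : WithTop ℝ)) ∧
    initForm val r w f = g}

/-- The map of valuation rings induced by a valued field extension. -/
def AddVal.restrictHom (val : AddVal K) (valL : AddVal L) (ι : K →+* L)
    (h : ∀ a, valL.v (ι a) = val.v a) : val.R →+* valL.R where
  toFun a := ⟨ι a.1, show (0 : WithTop ℝ) ≤ valL.v (ι a.1) by rw [h]; exact a.2⟩
  map_one' := Subtype.ext (by simp)
  map_mul' a b := Subtype.ext (by push_cast; simp)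
  map_zero' := Subtype.ext (by simp)
  map_add' a b := Subtype.ext (by push_cast; simp)

/-- The induced map of residue fields. -/
def AddVal.residueMap (val : AddVal K) (valL : AddVal L) (ι : K →+* L)
    (h : ∀ a, valL.v (ι a) = val.v a) : val.k →+* valL.k :=
  Ideal.Quotient.lift val.mIdeal
    ((Ideal.Quotient.mk valL.mIdeal).comp (val.restrictHom valL ι h))
    (fun a ha => by
      have hm : (val.restrictHom valL ι h) a ∈ valL.mIdeal := by
        show (0 : WithTop ℝ) < valL.v (ι a.1)
        rw [h]; exact ha
      exact Ideal.Quotient.eq_zero_iff_mem.mpr hm)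

/-- Extension of a coefficient ring homomorphism to Laurent polynomial rings. -/
def coeffMap {A B : Type*} [CommSemiring A] [CommSemiring B] (φ : A →+* B) (N : ℕ) :
    AddMonoidAlgebra A (Fin N → ℤ) →+* AddMonoidAlgebra B (Fin N → ℤ) :=
  AddMonoidAlgebra.liftNCRingHom (AddMonoidAlgebra.singleZeroRingHom.comp φ)
    (AddMonoidAlgebra.of B (Fin N → ℤ)) (fun _ _ => Commute.all _ _)

/-!
The inclusion `⊇` holds because, on tilted Laurent polynomials, taking `w`-initial forms commutes
with extending coefficients along `K → L`. For `⊆`, write a tilted `f ∈ I·L[x^±]` as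
`∑ cᵢ • gᵢ` with `gᵢ ∈ I`, `cᵢ ∈ L`, and induct on the number of terms. Rescale `g₀` so that it is
tilted with a coefficient of weight exactly `0` at some `u₀`, and clear the `u₀`-coefficients of
the other `gᵢ` by subtracting `K`-multiples of it. The `u₀`-coefficient of `f` then shows that the
new coefficient `d` of `g₀` has nonnegative valuation, so `f - d • g₀` is tilted, and since
initial forms are additive and `res`-linear on tilted elements,
`in_w(f) = res(d) • in_w(g₀) + in_w(f - d • g₀)` with the last term handled by induction.
-/

namespace AddVal

variable (val : AddVal K)

theorem v_zero : val.v 0 = ⊤ := (val.v_eq_top_iff 0).2 rfl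

theorem v_inv_add_self {a : K} (ha : a ≠ 0) : val.v a⁻¹ + val.v a = 0 := by
  rw [← val.v_mul, inv_mul_cancel₀ ha, val.v_one]

def valueGroup : AddSubgroup ℝ where
  carrier := {γ | ∃ a : K, a ≠ 0 ∧ val.v a = γ}
  zero_mem' := ⟨1, one_ne_zero, by rw [val.v_one]; rfl⟩
  add_mem' := by
    rintro γ δ ⟨a, ha, hva⟩ ⟨b, hb, hvb⟩
    exact ⟨a * b, mul_ne_zero ha hb, by rw [val.v_mul, hva, hvb, WithTop.coe_add]⟩
  neg_mem' := by
    rintro γ ⟨a, ha, hva⟩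
    refine ⟨a⁻¹, inv_ne_zero ha, WithTop.add_right_cancel (WithTop.coe_ne_top (a := γ)) ?_⟩
    rw [← hva, val.v_inv_add_self ha, hva, ← WithTop.coe_add, neg_add_cancel, WithTop.coe_zero]

theorem dotw_mem_valueGroup {N : ℕ} {w : Fin N → ℝ} (hw : ∀ i, w i ∈ val.valueGroup)
    (u : Fin N → ℤ) : dotw w u ∈ val.valueGroup :=
  sum_mem fun i _ => by
    rw [mul_comm, ← zsmul_eq_mul]
    exact zsmul_mem (hw i) (u i)

theorem valueGroup_le (valL : AddVal L) {ι : K →+* L} (hι : ∀ a, valL.v (ι a) = val.v a) :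
    val.valueGroup ≤ valL.valueGroup := by
  rintro γ ⟨a, ha, hva⟩
  exact ⟨ι a, (map_ne_zero ι).mpr ha, by rw [hι, hva]⟩

theorem res_of_nonneg {a : K} (ha : 0 ≤ val.v a) :
    val.res a = Ideal.Quotient.mk val.mIdeal ⟨a, ha⟩ := dif_pos ha

theorem res_eq_zero_of_pos {a : K} (ha : 0 < val.v a) : val.res a = 0 := by
  rw [val.res_of_nonneg ha.le]
  exact Ideal.Quotient.eq_zero_iff_mem.mpr ha

theorem res_add {a b : K} (ha : 0 ≤ val.v a) (hb : 0 ≤ val.v b) :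
    val.res (a + b) = val.res a + val.res b := by
  rw [val.res_of_nonneg ha, val.res_of_nonneg hb,
    val.res_of_nonneg (le_trans (le_min ha hb) (val.v_add a b))]
  exact map_add (Ideal.Quotient.mk val.mIdeal) ⟨a, ha⟩ ⟨b, hb⟩

theorem res_mul {a b : K} (ha : 0 ≤ val.v a) (hb : 0 ≤ val.v b) :
    val.res (a * b) = val.res a * val.res b := by
  rw [val.res_of_nonneg ha, val.res_of_nonneg hb,
    val.res_of_nonneg (by rw [val.v_mul]; exact add_nonneg ha hb)]
  exact map_mul (Ideal.Quotient.mk val.mIdeal) ⟨a, ha⟩ ⟨b, hb⟩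

theorem residueMap_res (valL : AddVal L) {ι : K →+* L} (hι : ∀ a, valL.v (ι a) = val.v a)
    {a : K} (ha : 0 ≤ val.v a) : val.residueMap valL ι hι (val.res a) = valL.res (ι a) := by
  rw [val.res_of_nonneg ha, valL.res_of_nonneg (by rwa [hι])]
  rfl

end AddVal

section CoeffMap

variable {A B : Type*} [CommSemiring A] [CommSemiring B] (φ : A →+* B) {N : ℕ}

theorem coeffMap_eq_mapRingHom :
    coeffMap φ N = AddMonoidAlgebra.mapRingHom (Fin N → ℤ) φ := by
  ext <;> simp [coeffMap]

theorem coeff_coeffMap (f : AddMonoidAlgebra A (Fin N → ℤ)) (u : Fin N → ℤ) :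
    (coeffMap φ N f).coeff u = φ (f.coeff u) := by
  rw [coeffMap_eq_mapRingHom, AddMonoidAlgebra.coeff_mapRingHom]

theorem coeffMap_smul (a : A) (f : AddMonoidAlgebra A (Fin N → ℤ)) :
    coeffMap φ N (a • f) = φ a • coeffMap φ N f := by
  ext u
  simp only [coeff_coeffMap, AddMonoidAlgebra.coeff_smul_apply, smul_eq_mul, map_mul]

end CoeffMap

section InitialForms

def Tilted (val : AddVal K) {N : ℕ} (w : Fin N → ℝ) (f : AddMonoidAlgebra K (Fin N → ℤ)) :
    Prop :=
  ∀ u, 0 ≤ val.v (f.coeff u) + (dotw w u : WithTop ℝ)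

variable {N : ℕ} {w : Fin N → ℝ} (val : AddVal K)

theorem tilted_iff_forall_mem_support {f : AddMonoidAlgebra K (Fin N → ℤ)} :
    (∀ u ∈ f.coeff.support, 0 ≤ val.v (f.coeff u) + (dotw w u : WithTop ℝ)) ↔
      Tilted val w f := by
  refine ⟨fun h u => ?_, fun h u _ => h u⟩
  by_cases hu : u ∈ f.coeff.support
  · exact h u hu
  · rw [Finsupp.notMem_support_iff.mp hu, val.v_zero, top_add]
    exact le_top

theorem Tilted.add {val : AddVal K} {f g : AddMonoidAlgebra K (Fin N → ℤ)}
    (hf : Tilted val w f) (hg : Tilted val w g) : Tilted val w (f + g) := fun u =>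
  calc 0 ≤ min (val.v (f.coeff u)) (val.v (g.coeff u)) + (dotw w u : WithTop ℝ) := by
        rw [← min_add_add_right]; exact le_min (hf u) (hg u)
    _ ≤ val.v ((f + g).coeff u) + (dotw w u : WithTop ℝ) := by
        gcongr; exact val.v_add _ _

theorem Tilted.neg {val : AddVal K} {f : AddMonoidAlgebra K (Fin N → ℤ)}
    (hf : Tilted val w f) : Tilted val w (-f) := fun u => by
  rw [AddMonoidAlgebra.coeff_neg, Finsupp.neg_apply, val.v_neg]
  exact hf u

theorem Tilted.sub {val : AddVal K} {f g : AddMonoidAlgebra K (Fin N → ℤ)}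
    (hf : Tilted val w f) (hg : Tilted val w g) : Tilted val w (f - g) :=
  sub_eq_add_neg f g ▸ hf.add hg.neg

theorem Tilted.smul {val : AddVal K} {f : AddMonoidAlgebra K (Fin N → ℤ)} {d : K}
    (hd : 0 ≤ val.v d) (hf : Tilted val w f) : Tilted val w (d • f) := fun u => by
  rw [AddMonoidAlgebra.coeff_smul_apply, smul_eq_mul, val.v_mul, add_assoc]
  exact add_nonneg hd (hf u)

theorem Tilted.coeffMap {val : AddVal K} {valL : AddVal L} {ι : K →+* L}
    (hι : ∀ a, valL.v (ι a) = val.v a) {f : AddMonoidAlgebra K (Fin N → ℤ)}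
    (hf : Tilted val w f) : Tilted valL w (coeffMap ι N f) := fun u => by
  rw [coeff_coeffMap, hι]
  exact hf u

theorem coeff_initForm (r : ℝ → K) (f : AddMonoidAlgebra K (Fin N → ℤ))
    (u : Fin N → ℤ) :
    (initForm val r w f).coeff u =
      if val.v (f.coeff u) + (dotw w u : WithTop ℝ) = 0 then val.res (f.coeff u * r (dotw w u))
      else 0 := by
  simp only [initForm, AddMonoidAlgebra.coeff_finsuppSum, AddMonoidAlgebra.coeff_single,
    Finsupp.sum_apply, Finsupp.single_apply, Finsupp.sum_ite_eq', Finsupp.mem_support_iff]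
  rcases eq_or_ne (f.coeff u) 0 with h0 | h0 <;> simp [h0, val.v_zero]

theorem coeff_initForm_of_tilted {r : ℝ → K}
    (hr : ∀ u, val.v (r (dotw w u)) = dotw w u) {f : AddMonoidAlgebra K (Fin N → ℤ)}
    (hf : Tilted val w f) (u : Fin N → ℤ) :
    (initForm val r w f).coeff u = val.res (f.coeff u * r (dotw w u)) := by
  rw [coeff_initForm]
  split_ifs with h
  · rfl
  · refine (val.res_eq_zero_of_pos ?_).symm
    rw [val.v_mul, hr]
    exact lt_of_le_of_ne (hf u) (Ne.symm h)

theorem initForm_add {r : ℝ → K} (hr : ∀ u, val.v (r (dotw w u)) = dotw w u)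
    {f g : AddMonoidAlgebra K (Fin N → ℤ)} (hf : Tilted val w f) (hg : Tilted val w g) :
    initForm val r w (f + g) = initForm val r w f + initForm val r w g := by
  ext u
  rw [AddMonoidAlgebra.coeff_add, Finsupp.add_apply, coeff_initForm_of_tilted val hr (hf.add hg),
    coeff_initForm_of_tilted val hr hf, coeff_initForm_of_tilted val hr hg,
    AddMonoidAlgebra.coeff_add, Finsupp.add_apply, add_mul]
  exact val.res_add (by rw [val.v_mul, hr]; exact hf u) (by rw [val.v_mul, hr]; exact hg u)

theorem initForm_smul {r : ℝ → K} (hr : ∀ u, val.v (r (dotw w u)) = dotw w u)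
    {f : AddMonoidAlgebra K (Fin N → ℤ)} {d : K} (hd : 0 ≤ val.v d) (hf : Tilted val w f) :
    initForm val r w (d • f) = val.res d • initForm val r w f := by
  ext u
  rw [AddMonoidAlgebra.coeff_smul_apply, coeff_initForm_of_tilted val hr (hf.smul hd),
    coeff_initForm_of_tilted val hr hf, AddMonoidAlgebra.coeff_smul_apply, smul_eq_mul,
    smul_eq_mul, mul_assoc]
  exact val.res_mul hd (by rw [val.v_mul, hr]; exact hf u)

theorem initForm_coeffMap {valL : AddVal L} {ι : K →+* L} (hι : ∀ a, valL.v (ι a) = val.v a)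
    {r : ℝ → K} {rL : ℝ → L} (hr : ∀ u, val.v (r (dotw w u)) = dotw w u)
    (hrL : ∀ u, valL.v (rL (dotw w u)) = dotw w u)
    (hcompat : ∀ u, ι (r (dotw w u)) = rL (dotw w u))
    {f : AddMonoidAlgebra K (Fin N → ℤ)} (hf : Tilted val w f) :
    initForm valL rL w (coeffMap ι N f) =
      coeffMap (val.residueMap valL ι hι) N (initForm val r w f) := by
  ext u
  rw [coeff_initForm_of_tilted valL hrL (hf.coeffMap hι), coeff_coeffMap, coeff_coeffMap,
    coeff_initForm_of_tilted val hr hf, ← hcompat, ← map_mul,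
    val.residueMap_res valL hι (by rw [val.v_mul, hr]; exact hf u)]

end InitialForms

theorem exists_smul_tilted_and_coeff_weight_eq_zero {N : ℕ} {w : Fin N → ℝ} (val : AddVal K)
    {r : ℝ → K} (hr : ∀ u, val.v (r (dotw w u)) = dotw w u)
    {g : AddMonoidAlgebra K (Fin N → ℤ)} (hg : g ≠ 0) : ∃ a : K, a ≠ 0 ∧ Tilted val w (a • g) ∧
      ∃ u₀, val.v ((a • g).coeff u₀) + (dotw w u₀ : WithTop ℝ) = 0 := by
  obtain ⟨u₀, hu₀, hmin⟩ := g.coeff.support.exists_min_image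
    (fun u => val.v (g.coeff u) + (dotw w u : WithTop ℝ))
    (Finsupp.support_nonempty_iff.mpr (AddMonoidAlgebra.coeff_eq_zero.not.mpr hg))
  set b := g.coeff u₀ * r (dotw w u₀)
  have hr₀ : r (dotw w u₀) ≠ 0 := fun h => by simpa [h, val.v_zero] using hr u₀
  have hb : b ≠ 0 := mul_ne_zero (Finsupp.mem_support_iff.mp hu₀) hr₀
  have hvb : val.v b = val.v (g.coeff u₀) + (dotw w u₀ : WithTop ℝ) := by rw [val.v_mul, hr]
  have hv : ∀ u, val.v ((b⁻¹ • g).coeff u) + (dotw w u : WithTop ℝ) =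
      val.v b⁻¹ + (val.v (g.coeff u) + (dotw w u : WithTop ℝ)) := fun u => by
    rw [AddMonoidAlgebra.coeff_smul_apply, smul_eq_mul, val.v_mul, add_assoc]
  refine ⟨b⁻¹, inv_ne_zero hb, fun u => ?_, u₀, by rw [hv, ← hvb, val.v_inv_add_self hb]⟩
  rw [hv, ← val.v_inv_add_self hb, hvb]
  by_cases hu : u ∈ g.coeff.support
  · exact add_le_add_right (hmin u hu) _
  · rw [Finsupp.notMem_support_iff.mp hu, val.v_zero, top_add, add_top]
    exact le_top

section SpanOfMap

variable {A B : Type*} [CommRing A] [CommRing B] (φ : A →+* B) {N : ℕ}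

theorem mul_mem_span_coeffMap_image {I : Ideal (AddMonoidAlgebra A (Fin N → ℤ))}
    (p : AddMonoidAlgebra B (Fin N → ℤ)) {x : AddMonoidAlgebra B (Fin N → ℤ)}
    (hx : x ∈ Submodule.span B (coeffMap φ N '' I)) :
    p * x ∈ Submodule.span B (coeffMap φ N '' I) := by
  induction hx using Submodule.span_induction with
  | mem y hy =>
    obtain ⟨g, hg, rfl⟩ := hy
    induction p using AddMonoidAlgebra.induction_linear with
    | zero => simp
    | add p q hp hq => rw [add_mul]; exact add_mem hp hq
    | single u b =>
      have hmono : AddMonoidAlgebra.single u b * coeffMap φ N g =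
          b • coeffMap φ N (AddMonoidAlgebra.single u 1 * g) := by
        rw [map_mul, coeffMap_eq_mapRingHom, AddMonoidAlgebra.mapRingHom_single, map_one,
          ← smul_mul_assoc, AddMonoidAlgebra.smul_single, smul_eq_mul, mul_one]
      rw [hmono]
      exact Submodule.smul_mem _ b (Submodule.subset_span ⟨_, I.mul_mem_left _ hg, rfl⟩)
  | zero => simp
  | add x y _ _ hx hy => rw [mul_add]; exact add_mem hx hy
  | smul a y _ hy => rw [mul_smul_comm]; exact Submodule.smul_mem _ a hy

theorem exists_sum_smul_coeffMap {I : Ideal (AddMonoidAlgebra A (Fin N → ℤ))}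
    {f : AddMonoidAlgebra B (Fin N → ℤ)} (hf : f ∈ I.map (coeffMap φ N)) :
    ∃ (s : ℕ) (G : Fin s → AddMonoidAlgebra A (Fin N → ℤ)), (∀ i, G i ∈ I) ∧
      ∃ c : Fin s → B, f = ∑ i, c i • coeffMap φ N (G i) := by
  have hfS : f ∈ Submodule.span B (coeffMap φ N '' I) := by
    induction hf using Submodule.span_induction with
    | mem y hy => exact Submodule.subset_span hy
    | zero => exact zero_mem _
    | add x y _ _ hx hy => exact add_mem hx hy
    | smul p x _ hx => exact mul_mem_span_coeffMap_image φ p hx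
  obtain ⟨s, c, g, hsum⟩ := Submodule.mem_span_set'.mp hfS
  choose G hG hGg using fun i => (g i).2
  exact ⟨s, G, hG, c, by simp only [hGg, hsum]⟩

end SpanOfMap

section BaseChange

variable {N : ℕ} {w : Fin N → ℝ} {val : AddVal K} {valL : AddVal L} {ι : K →+* L}
  (hι : ∀ a, valL.v (ι a) = val.v a) {r : ℝ → K} {rL : ℝ → L}
  {I : Ideal (AddMonoidAlgebra K (Fin N → ℤ))}

theorem initForm_smul_coeffMap_add_mem (hr : ∀ u, val.v (r (dotw w u)) = dotw w u)
    (hrL : ∀ u, valL.v (rL (dotw w u)) = dotw w u)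
    (hcompat : ∀ u, ι (r (dotw w u)) = rL (dotw w u)) {g : AddMonoidAlgebra K (Fin N → ℤ)}
    (hgI : g ∈ I) (hg : Tilted val w g) {u₀ : Fin N → ℤ}
    (hu₀ : val.v (g.coeff u₀) + (dotw w u₀ : WithTop ℝ) = 0)
    (d : L) {f : AddMonoidAlgebra L (Fin N → ℤ)} (hfu₀ : f.coeff u₀ = 0)
    (hdf : Tilted valL w (d • coeffMap ι N g + f))
    (hfJ : Tilted valL w f → initForm valL rL w f ∈
      (initIdeal val r w I).map (coeffMap (val.residueMap valL ι hι) N)) :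
    initForm valL rL w (d • coeffMap ι N g + f) ∈
      (initIdeal val r w I).map (coeffMap (val.residueMap valL ι hι) N) := by
  have hd : 0 ≤ valL.v d := by
    simpa [hfu₀, coeff_coeffMap, valL.v_mul, hι, add_assoc, hu₀] using hdf u₀
  have hdg : Tilted valL w (d • coeffMap ι N g) := (hg.coeffMap hι).smul hd
  have hft : Tilted valL w f := by simpa using hdf.sub hdg
  rw [initForm_add valL hrL hdg hft, initForm_smul valL hrL hd (hg.coeffMap hι),
    initForm_coeffMap val hι hr hrL hcompat hg]
  refine add_mem (Submodule.smul_of_tower_mem _ _ (Ideal.mem_map_of_mem _ ?_)) (hfJ hft)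
  exact Ideal.subset_span ⟨g, hgI, (tilted_iff_forall_mem_support val).mpr hg, rfl⟩

theorem initForm_sum_smul_coeffMap_mem (hr : ∀ u, val.v (r (dotw w u)) = dotw w u)
    (hrL : ∀ u, valL.v (rL (dotw w u)) = dotw w u)
    (hcompat : ∀ u, ι (r (dotw w u)) = rL (dotw w u)) {s : ℕ}
    (G : Fin s → AddMonoidAlgebra K (Fin N → ℤ)) (hG : ∀ i, G i ∈ I) (c : Fin s → L)
    (hf : Tilted valL w (∑ i, c i • coeffMap ι N (G i))) :
    initForm valL rL w (∑ i, c i • coeffMap ι N (G i)) ∈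
      (initIdeal val r w I).map (coeffMap (val.residueMap valL ι hι) N) := by
  induction s with
  | zero => simp [initForm]
  | succ s ih =>
    rw [Fin.sum_univ_succ] at hf ⊢
    by_cases hG₀ : G 0 = 0
    · simp only [hG₀, map_zero, smul_zero, zero_add] at hf ⊢
      exact ih _ (fun j => hG j.succ) _ hf
    obtain ⟨a, ha, hg, u₀, hu₀⟩ := exists_smul_tilted_and_coeff_weight_eq_zero val hr hG₀
    set g := a • G 0
    have hgI : g ∈ I := I.smul_of_tower_mem a (hG 0)
    have hgu₀ : g.coeff u₀ ≠ 0 := fun h => by simp [h, val.v_zero] at hu₀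
    set e : Fin s → K := fun j => (G j.succ).coeff u₀ / g.coeff u₀
    set G' : Fin s → AddMonoidAlgebra K (Fin N → ℤ) := fun j => G j.succ - e j • g
    have hG'u₀ : ∀ j, (G' j).coeff u₀ = 0 := fun j => by
      simp [G', e, div_mul_cancel₀ _ hgu₀]
    have hsplit :
        c 0 • coeffMap ι N (G 0) + ∑ j : Fin s, c j.succ • coeffMap ι N (G j.succ) =
        (c 0 * ι a⁻¹ + ∑ j, c j.succ * ι (e j)) • coeffMap ι N g +
          ∑ j, c j.succ • coeffMap ι N (G' j) := by
      have hG0 : G 0 = a⁻¹ • g := by simp [g, smul_smul, inv_mul_cancel₀ ha]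
      simp only [G', hG0, map_sub, coeffMap_smul, smul_sub, smul_smul, add_smul, Finset.sum_smul,
        Finset.sum_sub_distrib]
      abel
    rw [hsplit] at hf ⊢
    refine initForm_smul_coeffMap_add_mem hι hr hrL hcompat hgI hg hu₀ _ ?_ hf
      (ih G' (fun j => sub_mem (hG _) (I.smul_of_tower_mem _ hgI)) _)
    simp [AddMonoidAlgebra.coeff_sum, coeff_coeffMap, hG'u₀]

end BaseChange

theorem stmt16_general (N : ℕ) (val : AddVal K) (valL : AddVal L) (ι : K →+* L)
    (hι : ∀ a, valL.v (ι a) = val.v a)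
    (r : ℝ → K) (rL : ℝ → L)
    (hr : ∀ γ : ℝ, (∃ a : K, a ≠ 0 ∧ val.v a = (γ : WithTop ℝ)) →
      val.v (r γ) = (γ : WithTop ℝ))
    (hrL : ∀ γ : ℝ, (∃ x : L, x ≠ 0 ∧ valL.v x = (γ : WithTop ℝ)) →
      valL.v (rL γ) = (γ : WithTop ℝ))
    (hcompat : ∀ γ : ℝ, (∃ a : K, a ≠ 0 ∧ val.v a = (γ : WithTop ℝ)) → ι (r γ) = rL γ)
    (w : Fin N → ℝ) (hw : ∀ i, ∃ a : K, a ≠ 0 ∧ val.v a = ((w i : ℝ) : WithTop ℝ))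
    (I : Ideal (AddMonoidAlgebra K (Fin N → ℤ))) :
    initIdeal valL rL w (I.map (coeffMap ι N)) =
      (initIdeal val r w I).map (coeffMap (val.residueMap valL ι hι) N) := by
  have hwK : ∀ u, dotw w u ∈ val.valueGroup := val.dotw_mem_valueGroup hw
  have hrw : ∀ u, val.v (r (dotw w u)) = dotw w u := fun u => hr _ (hwK u)
  have hrLw : ∀ u, valL.v (rL (dotw w u)) = dotw w u :=
    fun u => hrL _ (val.valueGroup_le valL hι (hwK u))
  have hcw : ∀ u, ι (r (dotw w u)) = rL (dotw w u) := fun u => hcompat _ (hwK u)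
  refine le_antisymm (Ideal.span_le.mpr ?_) (Ideal.map_le_iff_le_comap.mpr (Ideal.span_le.mpr ?_))
  · rintro _ ⟨f, hf, hft, rfl⟩
    obtain ⟨s, G, hG, c, rfl⟩ := exists_sum_smul_coeffMap ι hf
    exact initForm_sum_smul_coeffMap_mem hι hrw hrLw hcw G hG c
      ((tilted_iff_forall_mem_support valL).mp hft)
  · rintro _ ⟨f, hf, hft, rfl⟩
    have hft := (tilted_iff_forall_mem_support val).mp hft
    rw [SetLike.mem_coe, Ideal.mem_comap, ← initForm_coeffMap val hι hrw hrLw hcw hft]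
    exact Ideal.subset_span ⟨coeffMap ι N f, Ideal.mem_map_of_mem _ hf,
      (tilted_iff_forall_mem_support valL).mpr (hft.coeffMap hι), rfl⟩

/-- Initial ideals commute with base change of valued fields: for `w` with
coordinates in the value group of `K` and compatible splittings `r`, `rL` of the
valuations of `K ⊆ L`, the `w`-initial ideal of the extension of `I` to
`L[x^±]` is the extension of `in_w(I)` to the Laurent polynomial ring over the
residue field of `L`. -/
theorem stmt16 (N : ℕ) (val : AddVal K) (valL : AddVal L) (ι : K →+* L)
    (hι : ∀ a, valL.v (ι a) = val.v a)
    (r : ℝ → K) (rL : ℝ → L)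
    (hr : ∀ γ : ℝ, (∃ a : K, a ≠ 0 ∧ val.v a = (γ : WithTop ℝ)) →
      val.v (r γ) = (γ : WithTop ℝ))
    (hrmul : ∀ γ δ : ℝ, (∃ a : K, a ≠ 0 ∧ val.v a = (γ : WithTop ℝ)) →
      (∃ a : K, a ≠ 0 ∧ val.v a = (δ : WithTop ℝ)) → r (γ + δ) = r γ * r δ)
    (hrL : ∀ γ : ℝ, (∃ x : L, x ≠ 0 ∧ valL.v x = (γ : WithTop ℝ)) →
      valL.v (rL γ) = (γ : WithTop ℝ))
    (hrLmul : ∀ γ δ : ℝ, (∃ x : L, x ≠ 0 ∧ valL.v x = (γ : WithTop ℝ)) →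
      (∃ x : L, x ≠ 0 ∧ valL.v x = (δ : WithTop ℝ)) → rL (γ + δ) = rL γ * rL δ)
    (hcompat : ∀ γ : ℝ, (∃ a : K, a ≠ 0 ∧ val.v a = (γ : WithTop ℝ)) → ι (r γ) = rL γ)
    (w : Fin N → ℝ) (hw : ∀ i, ∃ a : K, a ≠ 0 ∧ val.v a = ((w i : ℝ) : WithTop ℝ))
    (I : Ideal (AddMonoidAlgebra K (Fin N → ℤ))) :
    initIdeal valL rL w (I.map (coeffMap ι N)) =
      (initIdeal val r w I).map (coeffMap (val.residueMap valL ι hι) N) :=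
  stmt16_general N val valL ι hι r rL hr hrL hcompat w hw I

end
end
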